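/- arXiv:2501.18442 — 2 statements merged into one kernel-verified Lean document; each statement's English description precedes it below -/
import Mathlib

section
/- Under a consistent accept function, if a hospital h rejects a proposal from doctor d at some point during the DA meta-algorithm's run, then accept(≻_h, d, μ(h)) = false for the final match μ(h) of h; consequently (d,h) is not a blocking pair of the final matching. -/
/-- A state of the doctor-proposing deferred-acceptance meta-algorithm:
`matching h` is the doctor currently (tentatively) matched to hospital `h` (if any),
and `proposed d` is the set of hospitals doctor `d` has proposed to so far. -/
structure DAState (D H : Type*) where
  matching : H → Option D
  proposed : D → Finset H

/-- The initial state: nobody is matched and no proposals have been made. -/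
def DAInit (D H : Type*) : DAState D H := ⟨fun _ => none, fun _ => ∅⟩

/-- Doctor `d` is unmatched in state `s`. -/
def Unmatched {D H : Type*} (s : DAState D H) (d : D) : Prop :=
  ∀ h, s.matching h ≠ some d

/-- The algorithm terminates when every doctor is matched, or some doctor has been
rejected by (i.e., has proposed to) all hospitals while remaining unmatched. -/
def DATerminal {D H : Type*} [Fintype H] (s : DAState D H) : Prop :=
  (∀ d, ¬ Unmatched s d) ∨ (∃ d, Unmatched s d ∧ s.proposed d = Finset.univ)

/-- One step of the DA meta-algorithm in which the (unmatched) doctor `d` proposes to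
hospital `h`, its most preferred hospital not yet proposed to (`prefD d` is `d`'s rank
function over hospitals, lower = better); the hospital accepts or rejects according to
the accept function, and the state is updated accordingly.  The step is only allowed
while the main loop is running, i.e. no doctor has been rejected by all hospitals. -/
def DAStepAt {D H : Type*} [Fintype H] [DecidableEq D] [DecidableEq H]
    (prefD : D → H → ℕ) (accept : H → D → Option D → Bool)
    (d : D) (h : H) (s s' : DAState D H) : Prop :=
  Unmatched s d ∧
  (¬ ∃ d', Unmatched s d' ∧ s.proposed d' = Finset.univ) ∧
  h ∉ s.proposed d ∧
  (∀ h', h' ∉ s.proposed d → prefD d h ≤ prefD d h') ∧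
  s'.proposed = Function.update s.proposed d (insert h (s.proposed d)) ∧
  ((accept h d (s.matching h) = true ∧
      s'.matching = Function.update s.matching h (some d)) ∨
   (accept h d (s.matching h) = false ∧ s'.matching = s.matching))

/-- One step of the DA meta-algorithm, for an arbitrary choice of next proposing doctor
(this nondeterminism captures every possible `next` selection rule). -/
def DAStep {D H : Type*} [Fintype H] [DecidableEq D] [DecidableEq H]
    (prefD : D → H → ℕ) (accept : H → D → Option D → Bool) (s s' : DAState D H) : Prop :=
  ∃ d h, DAStepAt prefD accept d h s s'

/-- Consistency of an accept function with respect to hospital rank functions `prefH`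
(`prefH h d` = rank of doctor `d` at hospital `h`, lower = better):
(1) a doctor ranked below the current match is rejected;
(2) if `d` is rejected in favor of `d'`, so is every doctor ranked below `d`;
(3) proposals to an unmatched hospital are always accepted. -/
def Consistent {D H : Type*} (prefH : H → D → ℕ)
    (accept : H → D → Option D → Bool) : Prop :=
  (∀ h d d', prefH h d' < prefH h d → accept h d (some d') = false) ∧
  (∀ h d d' dhat, accept h d (some d') = false → prefH h d < prefH h dhat →
    accept h dhat (some d') = false) ∧
  (∀ h d, accept h d none = true)

/-- Under a consistent accept function, if hospital `h` rejects a proposal from doctor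
`d` at some step of a run of the DA meta-algorithm, then for the final (terminal)
matching `t` reached by the run, `accept h d (t.matching h) = false`; consequently
`(d,h)` is not a blocking pair of the final matching. -/
theorem rejected_never_blocks {D H : Type*} [Fintype D] [Fintype H]
    [DecidableEq D] [DecidableEq H]
    (prefD : D → H → ℕ) (prefH : H → D → ℕ)
    (hD : ∀ d, Function.Injective (prefD d)) (hH : ∀ h, Function.Injective (prefH h))
    (accept : H → D → Option D → Bool) (hacc : Consistent prefH accept)
    (s s' : DAState D H) (d : D) (h : H)
    (hreach : Relation.ReflTransGen (DAStep prefD accept) (DAInit D H) s)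
    (hstep : DAStepAt prefD accept d h s s')
    (hrej : accept h d (s.matching h) = false)
    (t : DAState D H)
    (hreach' : Relation.ReflTransGen (DAStep prefD accept) s' t)
    (hterm : DATerminal t) :
    accept h d (t.matching h) = false ∧
    ¬ ((Unmatched t d ∨ ∃ h', t.matching h' = some d ∧ prefD d h < prefD d h') ∧
        accept h d (t.matching h) = true) := by
  obtain ⟨h1, h2, h3⟩ := hacc
  have key : accept h d (t.matching h) = false ∧ h ∈ t.proposed d := by
    have base : accept h d (s'.matching h) = false ∧ h ∈ s'.proposed d := by
      obtain ⟨_, _, _, _, hp, hm⟩ := hstep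
      rcases hm with ⟨ha, _⟩ | ⟨_, hm⟩
      · rw [ha] at hrej; simp at hrej
      · refine ⟨by rw [hm]; exact hrej, ?_⟩
        rw [hp, Function.update_self]
        exact Finset.mem_insert_self h _
    clear hstep hrej hreach hterm
    induction hreach' with
    | refl => exact base
    | @tail b c hab hstep ih =>
      obtain ⟨haccb, hmem⟩ := ih
      obtain ⟨d0, h0, hu, _, hnp, _, hp, hm⟩ := hstep
      have hmem' : h ∈ c.proposed d := by
        rw [hp]
        by_cases hd : d = d0
        · subst hd; rw [Function.update_self]; exact Finset.mem_insert_of_mem hmem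
        · rw [Function.update_of_ne hd]; exact hmem
      refine ⟨?_, hmem'⟩
      rcases hm with ⟨hA, hm⟩ | ⟨_, hm⟩
      · rw [hm]
        by_cases hh : h0 = h
        · subst hh
          rw [Function.update_self]
          have hd0 : d0 ≠ d := fun he => hnp (he ▸ hmem)
          cases hmu : b.matching h0 with
          | none => rw [hmu, h3] at haccb; simp at haccb
          | some d' =>
            rw [hmu] at haccb hA
            have hle : ¬ prefH h0 d < prefH h0 d0 := fun hlt => by
              have := h2 h0 d d' d0 haccb hlt
              rw [hA] at this; simp at this
            have hlt : prefH h0 d0 < prefH h0 d := by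
              rcases lt_or_eq_of_le (not_lt.mp hle) with hx | hx
              · exact hx
              · exact absurd (hH h0 hx) hd0
            exact h1 h0 d d0 hlt
        · rw [Function.update_of_ne (Ne.symm hh)]; exact haccb
      · rw [hm]; exact haccb
  exact ⟨key.1, fun ⟨_, ht⟩ => by rw [key.1] at ht; simp at ht⟩
end

section
/- In the two-urn experiment with parameters m = n/2 and r = b = √n·log n: the expected number of red-hat draws until the overall experiment ends (a red ball drawn from the red hat followed—possibly after repetitions—by a blue ball from the blue hat) is ((m+1)/(r+1))², which is Ω(n/log² n). -/
/-!
Writing `π = σ⁻¹` for the map sending a ball to its position, `firstIdx R σ - 1` counts the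
balls that `π` places before every ball of `R`. By linearity one sums, over the `m - r` balls
`x ∉ R`, the number of orderings in which `x` precedes all of `R`; the relabelling
`π ↦ π * swap x z` shows that each ball of `insert x R` is equally likely to come first, so this
happens for exactly `m! / (r + 1)` orderings. Hence `E[firstIdx R] = 1 + (m - r) / (r + 1)
= (m + 1) / (r + 1)`, and the double sum over independent orderings factors into the square.
With `m + 1 ≥ n / 2` and `r + 1 ≤ 3 √n log n` the square is at least `n / (36 log² n)`.
-/

/-- The (1-based) position of the first ball from `R` in the ordering `σ` of `m` balls. -/
noncomputable def firstIdx {m : ℕ} (R : Finset (Fin m)) (σ : Equiv.Perm (Fin m)) : ℕ :=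
  1 + sInf {i : ℕ | ∃ h : i < m, σ ⟨i, h⟩ ∈ R}

open Finset Equiv
open scoped Nat

lemma swap_apply_mem_erase {α : Type*} [DecidableEq α] {T : Finset α} {x z y : α} (hx : x ∈ T)
    (hz : z ∈ T) (hy : y ∈ T.erase z) : swap x z y ∈ T.erase x := by
  rw [mem_erase] at hy ⊢
  refine ⟨by rw [Ne, swap_apply_eq_iff, swap_apply_left]; exact hy.1, ?_⟩
  rcases eq_or_ne y x with rfl | hyx
  · rwa [swap_apply_left]
  · rw [swap_apply_of_ne_of_ne hyx hy.1]; exact hy.2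

section FirstAmong

variable {α : Type*} [Fintype α] [LinearOrder α]

lemma card_perm_forall_erase_lt_eq {T : Finset α} {x z : α} (hx : x ∈ T) (hz : z ∈ T) :
    #{π : Perm α | ∀ y ∈ T.erase z, π z < π y}
      = #{π : Perm α | ∀ y ∈ T.erase x, π x < π y} := by
  refine card_equiv (Equiv.mulRight (swap x z)) fun π => ?_
  simp only [mem_filter, mem_univ, true_and, coe_mulRight, Perm.mul_apply, swap_apply_left]
  constructor
  · intro h y hy
    exact h _ (swap_comm x z ▸ swap_apply_mem_erase hz hx hy)
  · intro h y hy
    simpa using h _ (swap_apply_mem_erase hx hz hy)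

lemma sum_card_perm_forall_erase_lt {T : Finset α} (hT : T.Nonempty) :
    ∑ z ∈ T, #{π : Perm α | ∀ y ∈ T.erase z, π z < π y} = (Fintype.card α)! := by
  have hunique : ∀ π : Perm α, #{z ∈ T | ∀ y ∈ T.erase z, π z < π y} = 1 := by
    intro π
    obtain ⟨z, hz, hmin⟩ := T.exists_min_image π hT
    refine card_eq_one.mpr ⟨z, eq_singleton_iff_unique_mem.mpr ⟨?_, ?_⟩⟩
    · exact mem_filter.mpr ⟨hz, fun y hy =>
        (hmin y (mem_of_mem_erase hy)).lt_of_ne (π.injective.ne (ne_of_mem_erase hy).symm)⟩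
    · intro w hw
      rw [mem_filter] at hw
      by_contra hwz
      exact (hw.2 z (mem_erase.mpr ⟨Ne.symm hwz, hz⟩)).not_ge (hmin w hw.1)
  calc ∑ z ∈ T, #{π : Perm α | ∀ y ∈ T.erase z, π z < π y}
      = ∑ π : Perm α, #{z ∈ T | ∀ y ∈ T.erase z, π z < π y} := by
        simp only [card_filter]; exact sum_comm
    _ = (Fintype.card α)! := by
        simp only [hunique, sum_const, Finset.card_univ, Fintype.card_perm, smul_eq_mul, mul_one]

lemma card_perm_forall_lt_mul_card_add_one {S : Finset α} {x : α} (hx : x ∉ S) :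
    #{π : Perm α | ∀ y ∈ S, π x < π y} * (#S + 1) = (Fintype.card α)! := by
  have hxT : x ∈ insert x S := mem_insert_self x S
  rw [← sum_card_perm_forall_erase_lt (insert_nonempty x S),
    sum_congr rfl fun z hz => card_perm_forall_erase_lt_eq hxT hz, sum_const, erase_insert hx,
    card_insert_of_notMem hx, smul_eq_mul, mul_comm]

lemma card_add_one_mul_sum_card_forall_lt (S : Finset α) :
    (#S + 1) * ∑ π : Perm α, #{x | ∀ y ∈ S, π x < π y}
      = (Fintype.card α - #S) * (Fintype.card α)! := by
  have hcount : ∀ x, (#S + 1) * #{π : Perm α | ∀ y ∈ S, π x < π y}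
      = if x ∈ S then 0 else (Fintype.card α)! := by
    intro x
    split_ifs with hx
    · rw [card_eq_zero.mpr (filter_eq_empty_iff.mpr fun π _ h => lt_irrefl _ (h x hx)), mul_zero]
    · rw [mul_comm, card_perm_forall_lt_mul_card_add_one hx]
  calc (#S + 1) * ∑ π : Perm α, #{x | ∀ y ∈ S, π x < π y}
      = ∑ x, (#S + 1) * #{π : Perm α | ∀ y ∈ S, π x < π y} := by
        simp only [card_filter]; rw [sum_comm, mul_sum]
    _ = _ := by
        simp [hcount, sum_ite, filter_notMem_eq_sdiff, card_univ_sdiff]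

end FirstAmong

lemma firstIdx_inv {m : ℕ} {R : Finset (Fin m)} (hR : R.Nonempty) (π : Perm (Fin m)) :
    firstIdx R π⁻¹ = 1 + #{x | ∀ y ∈ R, π x < π y} := by
  set k := (R.image (π : Fin m → Fin m)).min' (hR.image π) with hk_def
  have hleast : IsLeast {i : ℕ | ∃ h : i < m, π⁻¹ ⟨i, h⟩ ∈ R} k := by
    refine ⟨⟨k.isLt, ?_⟩, ?_⟩
    · obtain ⟨y, hy, hyk⟩ := mem_image.mp ((R.image π).min'_mem (hR.image π))
      rwa [Fin.eta, hk_def, ← hyk, Perm.coe_inv, symm_apply_apply]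
    · rintro i ⟨hi, hiR⟩
      have hk : k ≤ π (π⁻¹ ⟨i, hi⟩) := min'_le _ _ (mem_image_of_mem π hiR)
      rwa [Perm.coe_inv, apply_symm_apply, Fin.le_def] at hk
  have hbefore : #{x | ∀ y ∈ R, π x < π y} = k := by
    have hlt : ∀ x, (∀ y ∈ R, π x < π y) ↔ π x < k := fun x => by simp [k, lt_min'_iff]
    simp_rw [hlt]
    rw [card_filter, Equiv.sum_comp π (fun i => if i < k then 1 else 0), ← card_filter,
      filter_gt_eq_Iio, Fin.card_Iio]
  rw [firstIdx, hleast.csInf_eq, hbefore]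

lemma sum_firstIdx {m : ℕ} {R : Finset (Fin m)} (hR : R.Nonempty) :
    ∑ σ : Perm (Fin m), (firstIdx R σ : ℝ) = (m + 1) / (#R + 1) * m ! := by
  have hRm : #R ≤ m := by simpa using card_le_univ R
  have hnat : (#R + 1) * ∑ σ : Perm (Fin m), firstIdx R σ = (m + 1) * m ! := by
    rw [← Equiv.sum_comp (Equiv.inv (Perm (Fin m)))]
    simp only [Equiv.inv_apply, firstIdx_inv hR, sum_add_distrib, sum_const, smul_eq_mul,
      mul_one, mul_add]
    rw [Finset.card_univ, Fintype.card_perm, Fintype.card_fin]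
    calc _ = (#R + 1) * m ! + (m - #R) * m ! := by
          congr 1
          have h := card_add_one_mul_sum_card_forall_lt R
          rw [Fintype.card_fin] at h
          -- `h` carries the `LinearOrder (Fin m)` instances, the goal the primitive `Fin` ones
          convert h
      _ = (m + 1) * m ! := by rw [← add_mul]; congr 1; omega
  rw [div_mul_eq_mul_div, eq_div_iff (by positivity)]
  exact_mod_cast (mul_comm _ _).trans hnat

open Real

lemma one_le_sqrt_mul_log {n : ℕ} (hn : 3 ≤ n) : 1 ≤ √n * log n := by
  have hn' : (3 : ℝ) ≤ n := by exact_mod_cast hn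
  have hsqrt : 1 ≤ √n := one_le_sqrt.mpr (by linarith)
  have hlog : 1 ≤ log n := by
    rw [le_log_iff_exp_le (by linarith)]
    linarith [exp_one_lt_d9]
  nlinarith

lemma div_log_sq_le {n : ℕ} (hn : 3 ≤ n) :
    1 / 36 * n / log n ^ 2 ≤ (((n / 2 : ℕ) + 1 : ℝ) / ((⌈√n * log n⌉₊ : ℝ) + 1)) ^ 2 := by
  have hL := one_le_sqrt_mul_log hn
  have hn0 : (0 : ℝ) < n := by positivity
  have hceil : (⌈√n * log n⌉₊ : ℝ) + 1 ≤ 3 * (√n * log n) := by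
    linarith [Nat.ceil_lt_add_one (by linarith : (0 : ℝ) ≤ √n * log n)]
  have hhalf : (n : ℝ) / 2 ≤ (n / 2 : ℕ) + 1 := by
    have : (n : ℝ) ≤ 2 * (n / 2 : ℕ) + 2 := by
      exact_mod_cast (by omega : n ≤ 2 * (n / 2) + 2)
    linarith
  calc 1 / 36 * n / log n ^ 2
      = ((n / 2) / (3 * (√n * log n))) ^ 2 := by
        rw [div_pow, mul_pow, mul_pow, sq_sqrt hn0.le]
        field_simp
        ring
    _ ≤ (((n / 2 : ℕ) + 1 : ℝ) / ((⌈√n * log n⌉₊ : ℝ) + 1)) ^ 2 := by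
        gcongr

/-- Two-urn experiment with `m = n/2` balls per hat and `r = b = ⌈√n·log n⌉` special
(red/blue) balls: if `X_r` and `X_b` are the positions of the first red and first blue
ball under independent uniformly random orderings, then the expected number of red-hat
draws until the experiment ends, namely `E[X_r · X_b]`, equals `((m+1)/(r+1))²`, which is
`Ω(n/log² n)`. -/
theorem two_urn_experiment_bound :
    ∃ c : ℝ, 0 < c ∧ ∃ N : ℕ, ∀ n : ℕ, N ≤ n →
      ∀ R B : Finset (Fin (n / 2)),
        R.card = ⌈Real.sqrt n * Real.log n⌉₊ →
        B.card = ⌈Real.sqrt n * Real.log n⌉₊ →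
        ((∑ σ : Equiv.Perm (Fin (n / 2)), ∑ τ : Equiv.Perm (Fin (n / 2)),
            (firstIdx R σ : ℝ) * (firstIdx B τ : ℝ)) /
          ((Fintype.card (Equiv.Perm (Fin (n / 2))) : ℝ) ^ 2)
          = (((n / 2 : ℕ) + 1 : ℝ) / ((⌈Real.sqrt n * Real.log n⌉₊ : ℝ) + 1)) ^ 2) ∧
        c * n / (Real.log n) ^ 2 ≤
          (((n / 2 : ℕ) + 1 : ℝ) / ((⌈Real.sqrt n * Real.log n⌉₊ : ℝ) + 1)) ^ 2 := by
  refine ⟨1 / 36, by norm_num, 3, fun n hn R B hR hB => ⟨?_, div_log_sq_le hn⟩⟩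
  have hr : 0 < ⌈√n * log n⌉₊ := Nat.ceil_pos.mpr (by linarith [one_le_sqrt_mul_log hn])
  rw [← sum_mul_sum, sum_firstIdx (card_pos.mp (hR ▸ hr)),
    sum_firstIdx (card_pos.mp (hB ▸ hr)), hR, hB, Fintype.card_perm, Fintype.card_fin]
  field_simp
end
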